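/- arXiv:1807.08786 — 2 statements merged into one kernel-verified Lean document; each statement's English description precedes it below -/
import Mathlib

section
/- Let A be a commutative ring, u an element with uⁿ ≠ 1 invertible differences, and x an element of an A-algebra with relation x·y = u·y·x for a fixed y. Then exp(Σ_{n≥1} aₙ xⁿ)·y·exp(-Σ_{n≥1} aₙ xⁿ) = y·exp(Σ_{n≥1} aₙ(uⁿ - 1)xⁿ) as formal series, where the xⁿ commute among themselves. -/
/-!
Both `rescale u E` and `F * E` solve the linear differential equation `G' = (g' + f') G`, where
`f = Σ aₙ Xⁿ` and `g = Σ aₙ (uⁿ - 1) Xⁿ`, because `rescale u f = g + f`; they have the same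
constant term, so they coincide. Pushing `E` past `y` turns it into `rescale u E = F * E`, and
`Einv` cancels `E`.
-/

open PowerSeries

namespace PowerSeries

variable {R : Type*}

theorem derivative_rescale [CommSemiring R] (c : R) (f : R⟦X⟧) :
    d⁄dX R (rescale c f) = C c * rescale c (d⁄dX R f) := by
  ext n
  rw [coeff_derivative, coeff_rescale, coeff_C_mul, coeff_rescale, coeff_derivative, pow_succ]
  ring

variable [CommRing R] [IsAddTorsionFree R]

theorem eq_of_derivative_eq_mul {q G H : R⟦X⟧} (hG : d⁄dX R G = q * G)
    (hH : d⁄dX R H = q * H) (h0 : constantCoeff G = constantCoeff H) : G = H := by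
  ext n
  induction n using Nat.strong_induction_on with
  | _ n ih =>
    cases n with
    | zero => simpa using h0
    | succ n =>
      have hlower : coeff n (q * G) = coeff n (q * H) := by
        rw [coeff_mul, coeff_mul]
        refine Finset.sum_congr rfl fun p hp => ?_
        rw [ih p.2 (Nat.lt_succ_of_le (Finset.HasAntidiagonal.antidiagonal.snd_le hp))]
      apply nsmul_right_injective n.succ_ne_zero
      simp only [nsmul_eq_mul, Nat.cast_succ, mul_comm _ (coeff (n + 1) _), ← coeff_derivative,
        hG, hH, hlower]

theorem rescale_eq_mul_of_derivative_eq_mul {c : R} {f g E F : R⟦X⟧}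
    (hfg : rescale c f = g + f) (hE : d⁄dX R E = d⁄dX R f * E)
    (hF : d⁄dX R F = d⁄dX R g * F) (hF0 : constantCoeff F = 1) :
    rescale c E = F * E := by
  have hq : C c * rescale c (d⁄dX R f) = d⁄dX R g + d⁄dX R f := by
    rw [← derivative_rescale, hfg, map_add]
  refine eq_of_derivative_eq_mul (q := d⁄dX R g + d⁄dX R f) ?_ ?_ ?_
  · rw [derivative_rescale, hE, map_mul, ← mul_assoc, hq]
  · rw [Derivation.leibniz, hE, hF, smul_eq_mul, smul_eq_mul]
    ring
  · rw [map_mul, hF0, one_mul, ← coeff_zero_eq_constantCoeff_apply, coeff_rescale, pow_zero,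
      one_mul, coeff_zero_eq_constantCoeff_apply]

end PowerSeries

theorem conjugation_by_exponential_general
    {A : Type*} [CommRing A] [Algebra ℚ A]
    (u : Aˣ)
    (a : ℕ → A)
    (E Einv F : A⟦X⟧)
    (hEder : derivativeFun E = derivativeFun (PowerSeries.mk a) * E)
    (hEinv : E * Einv = 1)
    (hF0 : constantCoeff F = 1)
    (hFder : derivativeFun F
      = derivativeFun (PowerSeries.mk fun n => a n * ((u : A) ^ n - 1)) * F)
    {B : Type*} [Ring B] [Algebra A B]
    (φ : A⟦X⟧ →ₐ[A] B)   -- f ↦ f(x)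
    (y : B)
    (hy : ∀ f : A⟦X⟧, φ f * y = y * φ (PowerSeries.rescale (u : A) f)) :
    φ E * y * φ Einv = y * φ F := by
  have : IsAddTorsionFree A := .of_module_rat A
  have hshift : rescale (u : A) (mk a) = (mk fun n => a n * ((u : A) ^ n - 1)) + mk a := by
    ext n
    simp only [coeff_rescale, coeff_mk, map_add]
    ring
  have hconj : rescale (u : A) E = F * E :=
    rescale_eq_mul_of_derivative_eq_mul hshift hEder hFder hF0
  rw [hy E, mul_assoc, ← map_mul, hconj, mul_assoc, hEinv, mul_one]

/-- Let `A` be a commutative ℚ-algebra, `u ∈ A` a unit, and work in an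
`A`-algebra containing `y` and the image of `A⟦x⟧` under `φ` (with `x = φ X`), with the
commutation relation `x y = u y x` extended to series as `φ f * y = y * φ (rescale u f)`.
If `E = exp(Σ_{n≥1} aₙ xⁿ)`, `Einv = exp(-Σ aₙ xⁿ)` (its inverse) and
`F = exp(Σ_{n≥1} aₙ(uⁿ-1) xⁿ)` — each exponential encoded by constant term `1` and its
logarithmic derivative — then `E y Einv = y F`. -/
theorem conjugation_by_exponential
    {A : Type*} [CommRing A] [Algebra ℚ A]
    (u : Aˣ)
    (a : ℕ → A) (ha0 : a 0 = 0)
    (E Einv F : A⟦X⟧)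
    (hE0 : constantCoeff E = 1)
    (hEder : derivativeFun E = derivativeFun (PowerSeries.mk a) * E)
    (hEinv : E * Einv = 1)
    (hF0 : constantCoeff F = 1)
    (hFder : derivativeFun F
      = derivativeFun (PowerSeries.mk fun n => a n * ((u : A) ^ n - 1)) * F)
    {B : Type*} [Ring B] [Algebra A B]
    (φ : A⟦X⟧ →ₐ[A] B)   -- f ↦ f(x)
    (y : B)
    (hy : ∀ f : A⟦X⟧, φ f * y = y * φ (PowerSeries.rescale (u : A) f)) :
    φ E * y * φ Einv = y * φ F :=
  conjugation_by_exponential_general u a E Einv F hEder hEinv hF0 hFder φ y hy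
end

section
/- Let u be a unit in a ℚ-algebra and let x, y satisfy x y = u y x. Set f(x) = exp(Σ_{n≥1} xⁿ/(n(uⁿ-1))), interpreted formally and assuming each uⁿ-1 is invertible as needed. Then f(x)·y·f(x)^{-1} = y · exp(Σ_{n≥1} xⁿ/n) = y·(1-x)^{-1}. -/
open PowerSeries

private lemma aux_inv_nat {A : Type*} [CommRing A] [Algebra ℚ A] (m : ℕ) :
    ((m : A) + 1) * algebraMap ℚ A (((m : ℚ) + 1)⁻¹) = 1 := by
  have h : ((m : A) + 1) = algebraMap ℚ A ((m : ℚ) + 1) := by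
    push_cast; simp
  rw [h, ← map_mul, mul_inv_cancel₀ (by positivity), map_one]

private lemma aux_coeff_derivativeFun {A : Type*} [CommRing A] (f : A⟦X⟧) (n : ℕ) :
    coeff n (derivativeFun f) = coeff (n + 1) f * (n + 1) :=
  coeff_derivative f n

private lemma aux_der_sub {A : Type*} [CommRing A] (f g : A⟦X⟧) :
    derivativeFun (f - g) = derivativeFun f - derivativeFun g := by
  ext n
  simp only [map_sub, aux_coeff_derivativeFun, sub_mul]

private lemma aux_zero_of_der {A : Type*} [CommRing A] [Algebra ℚ A] (L D : A⟦X⟧)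
    (hD : derivativeFun D = L * D) (h0 : constantCoeff (R := A) D = 0) : D = 0 := by
  have key : ∀ n, coeff n D = 0 := by
    intro n
    induction n using Nat.strong_induction_on with
    | _ n ih =>
      cases n with
      | zero => simpa [PowerSeries.coeff_zero_eq_constantCoeff] using h0
      | succ m =>
        have h1 := congrArg (coeff m) hD
        rw [aux_coeff_derivativeFun, coeff_mul] at h1
        have h2 : ∑ p ∈ Finset.HasAntidiagonal.antidiagonal m, coeff p.1 L * coeff p.2 D = 0 := by
          refine Finset.sum_eq_zero fun p hp => ?_
          rw [Finset.HasAntidiagonal.mem_antidiagonal] at hp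
          have : p.2 < m + 1 := by omega
          rw [ih p.2 this, mul_zero]
        rw [h2] at h1
        calc coeff (m + 1) D
            = coeff (m + 1) D * (((m : A) + 1) * algebraMap ℚ A (((m : ℚ) + 1)⁻¹)) := by
              rw [aux_inv_nat, mul_one]
          _ = (coeff (m + 1) D * ((m : A) + 1)) * algebraMap ℚ A (((m : ℚ) + 1)⁻¹) := by ring
          _ = 0 := by rw [h1, zero_mul]
  ext n
  simp [key n]

private lemma aux_uniq {A : Type*} [CommRing A] [Algebra ℚ A] (L F H : A⟦X⟧)
    (hF : derivativeFun F = L * F) (hH : derivativeFun H = L * H)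
    (h0 : constantCoeff (R := A) F = constantCoeff (R := A) H) : F = H := by
  have h : F - H = 0 := by
    apply aux_zero_of_der L
    · rw [aux_der_sub, hF, hH, mul_sub]
    · rw [map_sub, h0, sub_self]
  exact sub_eq_zero.mp h

private lemma aux_der_rescale {A : Type*} [CommRing A] (c : A) (f : A⟦X⟧) :
    derivativeFun (PowerSeries.rescale c f) = c • PowerSeries.rescale c (derivativeFun f) := by
  ext n
  rw [aux_coeff_derivativeFun, coeff_rescale]
  simp only [map_smul, smul_eq_mul, coeff_rescale, aux_coeff_derivativeFun]
  ring

/-- (a) The elementary identity `exp(Σ_{n≥1} tⁿ/n) = (1-t)⁻¹`: if `G` is the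
power series with constant term `1` whose logarithmic derivative is that of
`Σ_{n≥1} tⁿ/n`, then `(1-t)·G = 1`. (b) The conjugation rule of the previous statement
specialized to `aₙ = 1/(n(uⁿ-1))`: with `x y = u y x` and
`E = exp(Σ_{n≥1} xⁿ/(n(uⁿ-1)))`, one gets `E y E⁻¹ = y·exp(Σ_{n≥1} xⁿ/n) = y·(1-x)⁻¹`. -/
theorem quantum_dilog_exp_identity
    {A : Type*} [CommRing A] [Algebra ℚ A]
    (u : Aˣ)
    (a : ℕ → A) (ha0 : a 0 = 0)
    (ha : ∀ n : ℕ, 0 < n → (n : A) * ((u : A) ^ n - 1) * a n = 1)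
    (E Einv G : A⟦X⟧)
    (hE0 : constantCoeff (R := A) E = 1)
    (hEder : derivativeFun E = derivativeFun (PowerSeries.mk a) * E)
    (hEinv : E * Einv = 1)
    (hG0 : constantCoeff (R := A) G = 1)
    (hGder : derivativeFun G
      = derivativeFun (PowerSeries.mk fun n =>
          if n = 0 then 0 else algebraMap ℚ A ((n : ℚ)⁻¹)) * G)
    {B : Type*} [Ring B] [Algebra A B]
    (φ : A⟦X⟧ →ₐ[A] B)   -- f ↦ f(x)
    (y : B)
    (hy : ∀ f : A⟦X⟧, φ f * y = y * φ (PowerSeries.rescale (u : A) f)) :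
    ((1 - (X : A⟦X⟧)) * G = 1) ∧ (φ E * y * φ Einv = y * φ G) := by
  -- the derivative of Σ xⁿ/n is the geometric series
  have hQ : derivativeFun (PowerSeries.mk fun n =>
      if n = 0 then 0 else algebraMap ℚ A ((n : ℚ)⁻¹)) = PowerSeries.mk fun _ => (1 : A) := by
    ext n
    rw [aux_coeff_derivativeFun, coeff_mk, coeff_mk, if_neg (Nat.succ_ne_zero n)]
    have h := aux_inv_nat (A := A) n
    push_cast at h ⊢
    calc algebraMap ℚ A ((n : ℚ) + 1)⁻¹ * ((n : A) + 1)
        = ((n : A) + 1) * algebraMap ℚ A (((n : ℚ) + 1)⁻¹) := by ring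
      _ = 1 := h
  have hGder' : derivativeFun G = PowerSeries.mk (fun _ => (1 : A)) * G := by
    rw [hGder, hQ]
  -- geometric series identity
  have hgeo : (1 - (X : A⟦X⟧)) * PowerSeries.mk (fun _ => (1 : A)) = 1 := by
    ext n
    rw [sub_mul, one_mul, map_sub]
    cases n with
    | zero => simp
    | succ m => simp [PowerSeries.coeff_succ_X_mul]
  constructor
  · -- part (a)
    apply aux_uniq (0 : A⟦X⟧)
    · rw [derivativeFun_mul, hGder']
      have h1 : derivativeFun (1 - (X : A⟦X⟧)) = -1 := by
        rw [aux_der_sub, derivativeFun_one]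
        ext n
        rw [map_sub, map_zero, aux_coeff_derivativeFun]
        cases n <;> simp [PowerSeries.coeff_X]
      rw [h1, smul_eq_mul, smul_eq_mul, zero_mul]
      have h2 : (1 - (X : A⟦X⟧)) * (PowerSeries.mk (fun _ => (1 : A)) * G)
          = ((1 - (X : A⟦X⟧)) * PowerSeries.mk fun _ => (1 : A)) * G := by ring
      rw [h2, hgeo]
      ring
    · rw [derivativeFun_one, zero_mul]
    · simp [hG0]
  · -- part (b)
    have hEinv0 : constantCoeff (R := A) Einv = 1 := by
      have h := congrArg (constantCoeff (R := A)) hEinv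
      rw [map_mul, hE0, one_mul, map_one] at h
      exact h
    -- derivative of Einv
    have hEinvder : derivativeFun Einv = -(derivativeFun (PowerSeries.mk a) * Einv) := by
      have h := congrArg derivativeFun hEinv
      rw [derivativeFun_mul, derivativeFun_one, smul_eq_mul, smul_eq_mul, hEder] at h
      have h2 : Einv * (E * derivativeFun Einv + Einv * (derivativeFun (PowerSeries.mk a) * E))
          = 0 := by rw [h, mul_zero]
      have h3 : Einv * E = 1 := by rw [mul_comm]; exact hEinv
      calc derivativeFun Einv
          = (Einv * E) * derivativeFun Einv := by rw [h3, one_mul]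
        _ = Einv * (E * derivativeFun Einv + Einv * (derivativeFun (PowerSeries.mk a) * E))
              - (Einv * E) * (Einv * derivativeFun (PowerSeries.mk a)) := by ring
        _ = -(derivativeFun (PowerSeries.mk a) * Einv) := by rw [h2, h3]; ring
    -- the weight relation : u • rescale u P' - P' = geometric series
    have hP : (u : A) • (PowerSeries.rescale (u : A) (derivativeFun (PowerSeries.mk a)))
        - derivativeFun (PowerSeries.mk a) = PowerSeries.mk fun _ => (1 : A) := by
      ext n
      simp only [map_sub, map_smul, coeff_rescale, aux_coeff_derivativeFun, coeff_mk,
        smul_eq_mul]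
      have h := ha (n + 1) (Nat.succ_pos n)
      push_cast at h ⊢
      calc (u : A) * ((u : A) ^ n * (a (n + 1) * ((n : A) + 1)))
          - a (n + 1) * ((n : A) + 1)
          = ((n : A) + 1) * ((u : A) ^ (n + 1) - 1) * a (n + 1) := by ring
        _ = 1 := h
    -- key: rescale u E * Einv = G
    have hHder : derivativeFun (PowerSeries.rescale (u : A) E * Einv)
        = PowerSeries.mk (fun _ => (1 : A)) * (PowerSeries.rescale (u : A) E * Einv) := by
      rw [derivativeFun_mul, aux_der_rescale, hEder, map_mul, smul_eq_mul, smul_eq_mul,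
        hEinvder]
      calc PowerSeries.rescale (u : A) E * -(derivativeFun (PowerSeries.mk a) * Einv)
            + Einv * ((u : A) • (PowerSeries.rescale (u : A) (derivativeFun (PowerSeries.mk a))
              * PowerSeries.rescale (u : A) E))
          = ((u : A) • (PowerSeries.rescale (u : A) (derivativeFun (PowerSeries.mk a)))
              - derivativeFun (PowerSeries.mk a))
            * (PowerSeries.rescale (u : A) E * Einv) := by
            simp only [smul_eq_C_mul]; ring
        _ = _ := by rw [hP]
    have hH0 : constantCoeff (R := A) (PowerSeries.rescale (u : A) E * Einv) = constantCoeff (R := A) G := by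
      have h : constantCoeff (R := A) (PowerSeries.rescale (u : A) E) = 1 := by
        rw [← PowerSeries.coeff_zero_eq_constantCoeff, coeff_rescale, pow_zero, one_mul,
          PowerSeries.coeff_zero_eq_constantCoeff, hE0]
      rw [map_mul, h, hEinv0, hG0, one_mul]
    have hkey : PowerSeries.rescale (u : A) E * Einv = G :=
      aux_uniq (PowerSeries.mk fun _ => (1 : A)) _ G hHder hGder' hH0
    calc φ E * y * φ Einv = y * φ (PowerSeries.rescale (u : A) E) * φ Einv := by rw [hy E]
      _ = y * φ (PowerSeries.rescale (u : A) E * Einv) := by rw [map_mul, mul_assoc]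
      _ = y * φ G := by rw [hkey]
end
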